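/- arXiv:1711.11056 — 3 statements merged into one kernel-verified Lean document; each statement's English description precedes it below -/
import Mathlib

section
/- Let |ψ_s⟩ be a vector in a finite-dimensional complex Hilbert space with trivial stabilizer in the group G̃ of local invertible operators, and let |ψ⟩ = g|ψ_s⟩, |φ⟩ = h|ψ_s⟩ with g, h ∈ G̃. Then there exists a unitary u ∈ G̃ with |ψ⟩ = u|φ⟩ if and only if g†g = h†h. -/
open Matrix
open scoped ComplexOrder

/-- A matrix on the `n`-fold tensor product `(ℂ^d)^{⊗n}` (indexed by `Fin n → Fin d`)
is *local* if it is a tensor product of `n` single-site `d × d` matrices. -/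
def IsLocalOp (n d : ℕ) (M : Matrix (Fin n → Fin d) (Fin n → Fin d) ℂ) : Prop :=
  ∃ A : Fin n → Matrix (Fin d) (Fin d) ℂ, ∀ x y, M x y = ∏ i, A i (x i) (y i)

lemma sum_prod_eq (n d : ℕ) (f : Fin n → Fin d → ℂ) :
    (∑ p : Fin n → Fin d, ∏ i, f i (p i)) = ∏ i, ∑ j, f i j := by
  rw [Finset.prod_univ_sum, Fintype.piFinset_univ]

lemma prod_one_entry {n d : ℕ} (x y : Fin n → Fin d) :
    (∏ i, (1 : Matrix (Fin d) (Fin d) ℂ) (x i) (y i)) = (1 : Matrix (Fin n → Fin d) (Fin n → Fin d) ℂ) x y := by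
  by_cases hxy : x = y
  · subst hxy; simp [Matrix.one_apply]
  · obtain ⟨i, hi⟩ := Function.ne_iff.mp hxy
    rw [Matrix.one_apply_ne hxy]
    exact Finset.prod_eq_zero (Finset.mem_univ i) (Matrix.one_apply_ne hi)

lemma isLocalOp_one (n d : ℕ) : IsLocalOp n d 1 :=
  ⟨fun _ => 1, fun x y => (prod_one_entry x y).symm⟩

lemma local_mul_apply {n d : ℕ} {M N : Matrix (Fin n → Fin d) (Fin n → Fin d) ℂ}
    {A B : Fin n → Matrix (Fin d) (Fin d) ℂ}
    (hA : ∀ x y, M x y = ∏ i, A i (x i) (y i)) (hB : ∀ x y, N x y = ∏ i, B i (x i) (y i))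
    (x y : Fin n → Fin d) : (M * N) x y = ∏ i, (A i * B i) (x i) (y i) := by
  simp only [Matrix.mul_apply, hA, hB]
  rw [← sum_prod_eq n d fun i j => A i (x i) j * B i j (y i)]
  exact Finset.sum_congr rfl fun p _ => (Finset.prod_mul_distrib).symm

lemma IsLocalOp.mul {n d : ℕ} {M N : Matrix (Fin n → Fin d) (Fin n → Fin d) ℂ}
    (hM : IsLocalOp n d M) (hN : IsLocalOp n d N) : IsLocalOp n d (M * N) := by
  obtain ⟨A, hA⟩ := hM; obtain ⟨B, hB⟩ := hN
  exact ⟨fun i => A i * B i, local_mul_apply hA hB⟩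

lemma IsLocalOp.conjTranspose {n d : ℕ} {M : Matrix (Fin n → Fin d) (Fin n → Fin d) ℂ}
    (hM : IsLocalOp n d M) : IsLocalOp n d Mᴴ := by
  obtain ⟨A, hA⟩ := hM
  refine ⟨fun i => (A i)ᴴ, fun x y => ?_⟩
  simp only [Matrix.conjTranspose_apply, hA]
  rw [star_prod]

lemma IsLocalOp.inv {n d : ℕ} {M : Matrix (Fin n → Fin d) (Fin n → Fin d) ℂ}
    (hM : IsLocalOp n d M) (hMu : IsUnit M) : IsLocalOp n d M⁻¹ := by
  obtain ⟨A, hA⟩ := hM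
  have hdet : ∀ i, IsUnit (A i).det := by
    intro i₀
    rw [isUnit_iff_ne_zero]
    intro hdz
    obtain ⟨w, hw0, hwA⟩ := Matrix.exists_vecMul_eq_zero_iff.mpr hdz
    obtain ⟨jw, hjw⟩ := Function.ne_iff.mp hw0
    simp only [Pi.zero_apply] at hjw
    set e : Fin n → Fin d → ℂ := fun i j => if i = i₀ then w j else if j = jw then 1 else 0 with he
    set W : (Fin n → Fin d) → ℂ := fun p => ∏ i, e i (p i) with hW
    have hWne : W ≠ 0 := by
      intro h0
      have h1 : W (fun _ => jw) = 0 := by rw [h0]; rfl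
      rw [hW] at h1
      have h2 : (∏ i, e i jw) = 0 := h1
      rcases Finset.prod_eq_zero_iff.mp h2 with ⟨i, _, hi⟩
      rw [he] at hi
      by_cases hii : i = i₀ <;> simp [hii] at hi
      exact hjw hi
    have hWp : ∀ p, W p = ∏ i, e i (p i) := fun _ => rfl
    have hWM : W ᵥ* M = 0 := by
      funext x
      have h3 : (W ᵥ* M) x = ∑ p : Fin n → Fin d, ∏ i, (e i (p i) * A i (p i) (x i)) := by
        show (∑ p, W p * M p x) = _
        refine Finset.sum_congr rfl fun p _ => ?_
        rw [hWp, hA, Finset.prod_mul_distrib]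
      rw [h3, sum_prod_eq n d fun i j => e i j * A i j (x i)]
      refine Finset.prod_eq_zero (Finset.mem_univ i₀) ?_
      have h4 : (∑ j, e i₀ j * A i₀ j (x i₀)) = (w ᵥ* A i₀) (x i₀) := by
        simp [he, Matrix.vecMul, dotProduct]
      rw [h4, hwA]; rfl
    have h5 : W = 0 := by
      calc W = W ᵥ* 1 := by simp
        _ = W ᵥ* (M * M⁻¹) := by
              rw [Matrix.mul_nonsing_inv M ((Matrix.isUnit_iff_isUnit_det M).mp hMu)]
        _ = (W ᵥ* M) ᵥ* M⁻¹ := by rw [Matrix.vecMul_vecMul]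
        _ = 0 := by rw [hWM]; simp
    exact hWne h5
  set N : Matrix (Fin n → Fin d) (Fin n → Fin d) ℂ :=
    Matrix.of fun x y => ∏ i, (A i)⁻¹ (x i) (y i) with hN
  have hNap : ∀ x y, N x y = ∏ i, (A i)⁻¹ (x i) (y i) := fun _ _ => rfl
  have hMN : M * N = 1 := by
    funext x y
    rw [local_mul_apply (B := fun i => (A i)⁻¹) hA hNap x y, ← prod_one_entry x y]
    exact Finset.prod_congr rfl fun i _ => by rw [Matrix.mul_nonsing_inv _ (hdet i)]
  rw [Matrix.inv_eq_right_inv hMN]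
  exact ⟨fun i => (A i)⁻¹, fun x y => rfl⟩

/-- Let `ψs` have trivial stabilizer in the group `G̃` of local invertible operators, and
let `ψ = g ψs`, `φ = h ψs` with `g, h` local invertible. Then there exists a unitary
`u ∈ G̃` with `ψ = u φ` iff `gᴴ g = hᴴ h`. -/
theorem stmt_6 (n d : ℕ) (ψs : (Fin n → Fin d) → ℂ)
    (htriv : ∀ M : Matrix (Fin n → Fin d) (Fin n → Fin d) ℂ,
      IsLocalOp n d M → IsUnit M → M.mulVec ψs = ψs → M = 1)
    (g h : Matrix (Fin n → Fin d) (Fin n → Fin d) ℂ)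
    (hg : IsLocalOp n d g) (hgu : IsUnit g)
    (hh : IsLocalOp n d h) (hhu : IsUnit h) :
    (∃ u : Matrix (Fin n → Fin d) (Fin n → Fin d) ℂ,
        IsLocalOp n d u ∧ u ∈ Matrix.unitaryGroup (Fin n → Fin d) ℂ ∧
        g.mulVec ψs = u.mulVec (h.mulVec ψs)) ↔ gᴴ * g = hᴴ * h := by
  have hgd := (Matrix.isUnit_iff_isUnit_det g).mp hgu
  have hhd := (Matrix.isUnit_iff_isUnit_det h).mp hhu
  constructor
  · rintro ⟨u, hul, huU, heq⟩
    have huu : star u * u = 1 := (Unitary.mem_iff.mp huU).1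
    have huu' : u * star u = 1 := (Unitary.mem_iff.mp huU).2
    have huunit : IsUnit u := ⟨⟨u, star u, huu', huu⟩, rfl⟩
    set M := g⁻¹ * (u * h) with hM
    have hMloc : IsLocalOp n d M := (hg.inv hgu).mul (hul.mul hh)
    have hginv : IsUnit g⁻¹ :=
      ⟨⟨g⁻¹, g, Matrix.nonsing_inv_mul g hgd, Matrix.mul_nonsing_inv g hgd⟩, rfl⟩
    have hMunit : IsUnit M := hginv.mul (huunit.mul hhu)
    have hMpsi : M.mulVec ψs = ψs := by
      rw [hM, ← Matrix.mulVec_mulVec, ← Matrix.mulVec_mulVec, ← heq,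
        Matrix.mulVec_mulVec, Matrix.nonsing_inv_mul g hgd, Matrix.one_mulVec]
    have hM1 : M = 1 := htriv M hMloc hMunit hMpsi
    have hguh : u * h = g := by
      have h6 : g * (g⁻¹ * (u * h)) = g * 1 := by rw [← hM, hM1]
      rwa [← mul_assoc, Matrix.mul_nonsing_inv g hgd, one_mul, mul_one] at h6
    calc gᴴ * g = (u * h)ᴴ * (u * h) := by rw [hguh]
      _ = hᴴ * ((star u * u) * h) := by
          simp only [Matrix.conjTranspose_mul, Matrix.star_eq_conjTranspose, mul_assoc]
      _ = hᴴ * h := by rw [huu, one_mul]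
  · intro hgh
    refine ⟨g * h⁻¹, hg.mul (hh.inv hhu), ?_, ?_⟩
    · rw [Matrix.mem_unitaryGroup_iff']
      have : star (g * h⁻¹) = (h⁻¹)ᴴ * gᴴ := by
        simp [Matrix.star_eq_conjTranspose, Matrix.conjTranspose_mul]
      rw [this, Matrix.conjTranspose_nonsing_inv]
      calc (hᴴ)⁻¹ * gᴴ * (g * h⁻¹) = (hᴴ)⁻¹ * ((gᴴ * g) * h⁻¹) := by simp only [mul_assoc]
        _ = (hᴴ)⁻¹ * ((hᴴ * h) * h⁻¹) := by rw [hgh]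
        _ = ((hᴴ)⁻¹ * hᴴ) * (h * h⁻¹) := by simp only [mul_assoc]
        _ = 1 := by
              have hhdc : IsUnit (hᴴ).det := by
                rw [Matrix.det_conjTranspose, isUnit_iff_ne_zero, ne_eq, star_eq_zero]
                exact hhd.ne_zero
              rw [Matrix.nonsing_inv_mul _ hhdc, Matrix.mul_nonsing_inv _ hhd, one_mul]
    · rw [Matrix.mulVec_mulVec, mul_assoc, Matrix.nonsing_inv_mul _ hhd, mul_one]
end

section
/- Let f be defined by f(0) = 1, f(1) = √15·c_0, and f(k) = -4 c_{k-1} f(k-1) - c_{k-1}² f(k-2) for 2 ≤ k ≤ d, where c_i = (1/3)√(1 - (-4/15)^{d-i}) for 0 ≤ i ≤ d-1 and d ≥ 2. Then the sequence |f(1)|, |f(2)|, ..., |f(d)| is monotonically increasing; in particular f(d) ≠ 0. -/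
/-- The sequence `|f 1|, …, |f d|` defined by the tridiagonal recurrence with
`c_i = (1/3)√(1 - (-4/15)^{d-i})` is monotonically increasing; in particular `f d ≠ 0`. -/
theorem stmt_11 (d : ℕ) (hd : 2 ≤ d) (c : ℕ → ℝ)
    (hc : ∀ i, c i = (1 / 3) * Real.sqrt (1 - (-4 / 15 : ℝ) ^ (d - i)))
    (f : ℕ → ℝ) (hf0 : f 0 = 1) (hf1 : f 1 = Real.sqrt 15 * c 0)
    (hfk : ∀ k, 2 ≤ k → k ≤ d → f k = -4 * c (k - 1) * f (k - 1) - (c (k - 1)) ^ 2 * f (k - 2)) :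
    (∀ k, 1 ≤ k → k < d → |f k| < |f (k + 1)|) ∧ f d ≠ 0 := by
  -- bounds on c i for i < d
  have hcb : ∀ i, i < d → 57/200 ≤ c i ∧ c i ≤ 1 := by
    intro i hi
    have hm : 1 ≤ d - i := by omega
    have hx : |(-4/15 : ℝ) ^ (d - i)| ≤ 4/15 := by
      rw [abs_pow]
      have h4 : |(-4/15 : ℝ)| = 4/15 := by
        rw [abs_of_nonpos] <;> norm_num
      rw [h4]
      calc (4/15:ℝ)^(d-i) ≤ (4/15)^1 :=
            pow_le_pow_of_le_one (by norm_num) (by norm_num) hm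
        _ = 4/15 := pow_one _
    obtain ⟨hxl, hxu⟩ := abs_le.mp hx
    have hnn : (0:ℝ) ≤ 1 - (-4/15 : ℝ) ^ (d - i) := by linarith
    set s := Real.sqrt (1 - (-4/15 : ℝ) ^ (d - i)) with hsdef
    have hs0 : 0 ≤ s := Real.sqrt_nonneg _
    have hs2 : s^2 = 1 - (-4/15 : ℝ) ^ (d - i) := Real.sq_sqrt hnn
    have hcform : c i = (1/3) * s := by
      rw [hc i]
    constructor
    · rw [hcform]; nlinarith
    · rw [hcform]; nlinarith
  -- main induction
  have key : ∀ k, 1 ≤ k → k ≤ d → |f (k-1)| < |f k| := by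
    intro k
    induction k with
    | zero => intro h; omega
    | succ n ih =>
      intro _ hkd
      simp only [Nat.add_sub_cancel]
      rcases Nat.eq_zero_or_pos n with h0 | h1
      · subst h0
        obtain ⟨hcl, hcu⟩ := hcb 0 (by omega)
        have hc0 : 0 ≤ c 0 := by linarith
        have hs15 : (Real.sqrt 15)^2 = 15 := Real.sq_sqrt (by norm_num)
        have hs15n : 0 ≤ Real.sqrt 15 := Real.sqrt_nonneg _
        rw [hf0, hf1, abs_one, abs_of_nonneg (mul_nonneg hs15n hc0)]
        nlinarith
      · have IH : |f (n-1)| < |f n| := ih h1 (by omega)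
        have hrec := hfk (n+1) (by omega) hkd
        have e2 : n + 1 - 2 = n - 1 := by omega
        rw [Nat.add_sub_cancel, e2] at hrec
        obtain ⟨hcl, hcu⟩ := hcb n (by omega)
        have hcpos : (0:ℝ) < c n := by linarith
        have habs : |(-4 * c n * f n)| - |c n ^ 2 * f (n-1)| ≤ |f (n+1)| := by
          rw [hrec]
          exact abs_sub_abs_le_abs_sub _ _
        have e3 : |(-4 * c n * f n)| = 4 * c n * |f n| := by
          rw [abs_mul, abs_mul, abs_of_nonpos (by norm_num : (-4:ℝ) ≤ 0),
            abs_of_nonneg hcpos.le]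
          ring
        have e4 : |c n ^ 2 * f (n-1)| = c n ^ 2 * |f (n-1)| := by
          rw [abs_mul, abs_of_nonneg (sq_nonneg _)]
        rw [e3, e4] at habs
        have hv : 0 ≤ |f (n-1)| := abs_nonneg _
        have hu : 0 < |f n| := lt_of_le_of_lt hv IH
        have hq : 1 < 4 * c n - c n ^ 2 := by nlinarith
        nlinarith [mul_le_mul_of_nonneg_left IH.le (sq_nonneg (c n)),
          mul_pos (by linarith : (0:ℝ) < 4 * c n - c n ^ 2 - 1) hu]
  constructor
  · intro k hk1 hkd
    have h := key (k+1) (by omega) (by omega)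
    simpa using h
  · have h := key d (by omega) le_rfl
    have : 0 < |f d| := lt_of_le_of_lt (abs_nonneg _) h
    intro hfd
    rw [hfd] at this
    simp at this
end

section
/- Let U_0, ..., U_{d-1} be unitary d×d matrices such that the set {U_j U_k† : j ≠ k} is linearly independent over ℂ. Suppose V is a unitary d×d matrix with entries V_{ij} such that for every i, the matrix W_i = ∑_j V_{ij} U_j is unitary. Then every row of V has exactly one nonzero entry; that is, there exist a permutation σ of {0,...,d-1} and phases e^{iφ_i} such that V_{ij} = e^{iφ_i} δ_{j,σ(i)}. -/
/-!
Expanding `Wᵢ Wᵢᴴ = 1` with `Wᵢ = ∑ⱼ V_{ij} Uⱼ` gives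
`∑ⱼ |V_{ij}|² · 1 + ∑_{j ≠ k} V_{ij} V̄_{ik} Uⱼ Uₖᴴ = 1`, and the diagonal part is already `1`
because the rows of `V` are unit vectors. Linear independence of the `Uⱼ Uₖᴴ` then kills every
product `V_{ij} V̄_{ik}` with `j ≠ k`, so each row of `V` is a phase times a standard basis
vector; orthogonality of the rows makes the chosen columns distinct.
-/

open Matrix

theorem Fintype.sum_prod_eq_sum_diag_add_sum_ne {ι M : Type*} [Fintype ι] [DecidableEq ι]
    [AddCommMonoid M] (f : ι × ι → M) :
    ∑ p, f p = ∑ i, f (i, i) + ∑ p : {p : ι × ι // p.1 ≠ p.2}, f p := by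
  rw [← Fintype.sum_subtype_add_sum_subtype (fun p : ι × ι => p.1 = p.2) f]
  congr 1
  rw [← Finset.sum_subtype Finset.univ.diag (fun _ => by simp) f, Finset.sum_diag]

section StarAlgebra

variable {R A ι : Type*} [CommRing R] [StarRing R] [Ring A] [StarRing A] [Algebra R A]
  [StarModule R A] [Fintype ι]

theorem sum_smul_mul_star_sum_smul (c : ι → R) (a : ι → A) :
    (∑ j, c j • a j) * star (∑ j, c j • a j) =
      ∑ p : ι × ι, (c p.1 * star (c p.2)) • (a p.1 * star (a p.2)) := by
  simp only [star_sum, star_smul, Finset.sum_mul_sum, smul_mul_smul_comm]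
  exact (Fintype.sum_prod_type' _).symm

theorem mul_star_eq_zero_of_linearIndependent_mul_star [DecidableEq ι] {a : ι → A}
    (ha : ∀ j, a j * star (a j) = 1)
    (hind : LinearIndependent R fun p : {p : ι × ι // p.1 ≠ p.2} => a p.1.1 * star (a p.1.2))
    {c : ι → R} (hc : ∑ j, c j * star (c j) = 1)
    (hx : (∑ j, c j • a j) * star (∑ j, c j • a j) = 1) {j k : ι} (hjk : j ≠ k) :
    c j * star (c k) = 0 := by
  rw [sum_smul_mul_star_sum_smul, Fintype.sum_prod_eq_sum_diag_add_sum_ne] at hx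
  simp only [ha, ← Finset.sum_smul, hc, one_smul, add_eq_left] at hx
  exact Fintype.linearIndependent_iff.mp hind _ hx ⟨(j, k), hjk⟩

end StarAlgebra

theorem Matrix.dotProduct_star_of_mem_unitaryGroup {n α : Type*} [Fintype n] [DecidableEq n]
    [CommRing α] [StarRing α] {V : Matrix n n α} (hV : V ∈ unitaryGroup n α) (i i' : n) :
    V i ⬝ᵥ star (V i') = (1 : Matrix n n α) i i' := by
  rw [← mem_unitaryGroup_iff.mp hV]
  rfl

section PhasedPermutation

variable {n : Type*} [Fintype n] [DecidableEq n]

theorem exists_eq_single_exp_of_dotProduct_star {v : n → ℂ} (hnorm : v ⬝ᵥ star v = 1)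
    (hortho : ∀ j k, j ≠ k → v j * star (v k) = 0) :
    ∃ j, ∃ φ : ℝ, v = Pi.single j (Complex.exp (φ * Complex.I)) := by
  obtain ⟨j, hj⟩ : ∃ j, v j ≠ 0 := by
    by_contra! h
    simp [funext h] at hnorm
  have hv : v = Pi.single j (v j) := by
    ext k
    rcases eq_or_ne k j with rfl | hk
    · simp
    · simpa [hk, hj] using hortho k j hk
  have hnorm1 : ‖v j‖ = 1 := by
    rw [hv, ← Pi.single_star, single_dotProduct, Pi.single_eq_same, RCLike.star_def,
      Complex.mul_conj', ← Complex.ofReal_pow, Complex.ofReal_eq_one] at hnorm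
    exact (pow_eq_one_iff_of_nonneg (norm_nonneg _) two_ne_zero).mp hnorm
  refine ⟨j, (v j).arg, hv.trans (congrArg _ ?_)⟩
  simpa [hnorm1] using (Complex.norm_mul_exp_arg_mul_I (v j)).symm

theorem Matrix.exists_perm_exp_of_mem_unitaryGroup {V : Matrix n n ℂ}
    (hV : V ∈ unitaryGroup n ℂ) (hrow : ∀ i j k, j ≠ k → V i j * star (V i k) = 0) :
    ∃ (σ : Equiv.Perm n) (φ : n → ℝ), ∀ i j,
      V i j = if j = σ i then Complex.exp ((φ i : ℂ) * Complex.I) else 0 := by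
  have hVV := dotProduct_star_of_mem_unitaryGroup hV
  choose σ φ hσ using fun i =>
    exists_eq_single_exp_of_dotProduct_star (by simpa using hVV i i) (hrow i)
  have hinj : Function.Injective σ := by
    intro i i' h
    by_contra hne
    have := hVV i i'
    rw [hσ i, hσ i', h, one_apply_ne hne, ← Pi.single_star, single_dotProduct,
      Pi.single_eq_same] at this
    simp [Complex.exp_ne_zero] at this
  refine ⟨Equiv.ofBijective σ hinj.bijective_of_finite, φ, fun i j => ?_⟩
  rw [hσ i, Pi.single_apply, Equiv.ofBijective_apply]

end PhasedPermutation

/-- If the set `{Uⱼ Uₖᴴ : j ≠ k}` is linearly independent and `V` is a unitary matrix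
such that every `Wᵢ = ∑ⱼ V_{ij} Uⱼ` is unitary, then `V` is a phased permutation matrix:
`V_{ij} = e^{iφᵢ} δ_{j, σ(i)}` for some permutation `σ` and real phases `φᵢ`. -/
theorem stmt_14 (d : ℕ)
    (U : Fin d → Matrix (Fin d) (Fin d) ℂ)
    (hU : ∀ j, U j ∈ Matrix.unitaryGroup (Fin d) ℂ)
    (hind : LinearIndependent ℂ
      (fun p : {p : Fin d × Fin d // p.1 ≠ p.2} => U p.1.1 * (U p.1.2)ᴴ))
    (V : Matrix (Fin d) (Fin d) ℂ)
    (hV : V ∈ Matrix.unitaryGroup (Fin d) ℂ)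
    (hW : ∀ i, (∑ j, V i j • U j) ∈ Matrix.unitaryGroup (Fin d) ℂ) :
    ∃ (σ : Equiv.Perm (Fin d)) (φ : Fin d → ℝ), ∀ i j,
      V i j = if j = σ i then Complex.exp ((φ i : ℂ) * Complex.I) else 0 := by
  refine exists_perm_exp_of_mem_unitaryGroup hV fun i _ _ hjk => ?_
  have hrow : ∑ j, V i j * star (V i j) = 1 := by
    simpa [dotProduct] using dotProduct_star_of_mem_unitaryGroup hV i i
  exact mul_star_eq_zero_of_linearIndependent_mul_star (fun j => mem_unitaryGroup_iff.mp (hU j))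
    hind hrow (mem_unitaryGroup_iff.mp (hW i)) hjk
end
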